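/- arXiv:1910.09013 — 4 statements merged into one kernel-verified Lean document; each statement's English description precedes it below -/
import Mathlib

section
/- Let Y = {a, b} with the partial metric p(a,a) = 0, p(a,b) = p(b,a) = p(b,b) = 1. Then p is a partial metric on Y, the subset {a} is topologically dense in Y, but {a} is not symmetrically dense in Y. -/
def IsPartialMetric {X : Type*} (p : X → X → ℝ) : Prop :=
  (∀ x y, 0 ≤ p x y) ∧
  (∀ x y, p x x = p x y → p x y = p y y → x = y) ∧
  (∀ x y, p x x ≤ p x y) ∧
  (∀ x y, p x y = p y x) ∧
  (∀ x y z, p x z + p y y ≤ p x y + p y z)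

theorem stmt5 :
    let p : Bool → Bool → ℝ := fun x y => if x = false ∧ y = false then 0 else 1
    IsPartialMetric p ∧
    (∀ x : Bool, ∀ ε : ℝ, 0 < ε → ∃ y ∈ ({false} : Set Bool), p x y < p x x + ε) ∧
    ¬ (∀ x : Bool, ∀ ε : ℝ, 0 < ε → ∃ y ∈ ({false} : Set Bool),
        p x y < p x x + ε ∧ p y x < p y y + ε) := by
  intro p
  refine ⟨⟨?_, ?_, ?_, ?_, ?_⟩, ?_, ?_⟩
  · intro x y; simp only [p]; split <;> norm_num
  · intro x y; cases x <;> cases y <;> simp [p]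
  · intro x y; cases x <;> cases y <;> simp [p]
  · intro x y; cases x <;> cases y <;> simp [p]
  · intro x y z; cases x <;> cases y <;> cases z <;> simp [p] <;> norm_num
  · intro x ε hε
    refine ⟨false, rfl, ?_⟩
    cases x <;> simp [p] <;> linarith
  · intro h
    obtain ⟨y, hy, _, h2⟩ := h true (1/2) (by norm_num)
    rcases hy with rfl
    simp [p] at h2
    linarith
end

section
/- In the Kahn domain Σ^{≤ω} with partial metric p(x,y) = 2^{-lcp(x,y)}, the set Σ^{<ω} \ {ε} of nonempty finite strings is topologically dense in Σ^{≤ω}, but is not symmetrically dense in Σ^{≤ω} (the empty string ε witnesses failure of symmetric denseness). -/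
def Kahn (α : Type*) : Type _ :=
  {x : ℕ → Option α // ∀ n, x n = none → x (n + 1) = none}

noncomputable def lcp {α : Type*} (x y : ℕ → Option α) : ℕ∞ :=
  sInf ((fun m : ℕ => (m : ℕ∞)) '' {m : ℕ | x m = none ∨ x m ≠ y m})

noncomputable def kp {α : Type*} (x y : ℕ → Option α) : ℝ :=
  if lcp x y = ⊤ then 0 else (2 : ℝ) ^ (-((lcp x y).toNat : ℤ))

lemma lcp_eq_coe {α : Type*} (x y : ℕ → Option α) (n : ℕ)
    (hn : x n = none ∨ x n ≠ y n)
    (hmin : ∀ m < n, ¬(x m = none ∨ x m ≠ y m)) : lcp x y = (n : ℕ∞) := by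
  unfold lcp
  apply le_antisymm
  · exact sInf_le ⟨n, hn, rfl⟩
  · apply le_sInf
    rintro a ⟨m, hm, rfl⟩
    exact Nat.cast_le.mpr (Nat.le_of_not_lt (fun h => hmin m h hm))

lemma kp_eq {α : Type*} (x y : ℕ → Option α) (n : ℕ)
    (h : lcp x y = (n : ℕ∞)) : kp x y = (2 : ℝ) ^ (-(n : ℤ)) := by
  unfold kp
  rw [h, if_neg (by exact_mod_cast WithTop.coe_ne_top)]
  simp

lemma kp_nonneg {α : Type*} (x y : ℕ → Option α) : 0 ≤ kp x y := by
  unfold kp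
  split
  · exact le_refl 0
  · positivity

lemma part3 {α : Type*} (y : Kahn α) (hy : (∃ n, y.1 n = none) ∧ y.1 0 ≠ none)
    (δ : ℝ) (hδ : 0 < δ) (hδ' : δ ≤ 1 / 2) :
    ¬ kp y.1 (fun _ => (none : Option α)) < kp y.1 y.1 + δ := by
  classical
  obtain ⟨hex, h0⟩ := hy
  have h1 : lcp y.1 (fun _ => (none : Option α)) = (0 : ℕ) :=
    lcp_eq_coe _ _ 0 (Or.inr h0) (by omega)
  have hk1 : kp y.1 (fun _ => (none : Option α)) = 1 := by
    rw [kp_eq _ _ 0 h1]; norm_num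
  set n0 := Nat.find hex with hn0
  have hpos : 1 ≤ n0 := by
    rcases Nat.eq_zero_or_pos n0 with h | h
    · exact absurd (h ▸ Nat.find_spec hex) h0
    · exact h
  have h2 : lcp y.1 y.1 = (n0 : ℕ∞) := by
    apply lcp_eq_coe
    · exact Or.inl (Nat.find_spec hex)
    · intro m hm
      push_neg
      exact ⟨Nat.find_min hex hm, rfl⟩
  have hk2 : kp y.1 y.1 ≤ 1 / 2 := by
    rw [kp_eq _ _ n0 h2]
    calc (2 : ℝ) ^ (-(n0 : ℤ)) ≤ (2 : ℝ) ^ (-(1 : ℤ)) := by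
          apply zpow_le_zpow_right₀ (by norm_num) (by omega)
      _ = 1 / 2 := by norm_num
  rw [hk1]
  linarith

theorem stmt15 {α : Type*} [Nonempty α] :
    let A : Set (Kahn α) := {x | (∃ n, x.1 n = none) ∧ x.1 0 ≠ none}
    (∀ x : Kahn α, ∀ ε : ℝ, 0 < ε → ∃ y ∈ A, kp x.1 y.1 < kp x.1 x.1 + ε) ∧
    ¬ (∀ x : Kahn α, ∀ ε : ℝ, 0 < ε → ∃ y ∈ A,
        kp x.1 y.1 < kp x.1 x.1 + ε ∧ kp y.1 x.1 < kp y.1 y.1 + ε) ∧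
    (∀ y ∈ A, ∀ δ : ℝ, 0 < δ → δ ≤ 1 / 2 →
      ¬ kp y.1 (fun _ => (none : Option α)) < kp y.1 y.1 + δ) := by
  intro A
  classical
  refine ⟨?_, ?_, fun y hy δ h1 h2 => part3 y hy δ h1 h2⟩
  · intro x ε hε
    by_cases h0 : x.1 0 = none
    · -- x = empty string; any element of A is within distance
      obtain ⟨a⟩ := ‹Nonempty α›
      refine ⟨⟨fun n => if n = 0 then some a else none, by intro n h; simp⟩,
        ⟨⟨1, by simp⟩, by simp⟩, ?_⟩
      have h1 : lcp x.1 (fun n => if n = 0 then some a else none) = (0 : ℕ) :=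
        lcp_eq_coe _ _ 0 (Or.inl h0) (by omega)
      have h2 : lcp x.1 x.1 = (0 : ℕ) :=
        lcp_eq_coe _ _ 0 (Or.inl h0) (by omega)
      rw [kp_eq _ _ 0 h1, kp_eq _ _ 0 h2]
      linarith
    · obtain ⟨N, hN⟩ := exists_pow_lt_of_lt_one hε (by norm_num : (1 : ℝ) / 2 < 1)
      set M := N + 1 with hM
      have hMlt : (2 : ℝ) ^ (-(M : ℤ)) < ε := by
        calc (2 : ℝ) ^ (-(M : ℤ)) = (1 / 2 : ℝ) ^ M := by
              rw [zpow_neg, zpow_natCast]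
              rw [one_div, inv_pow]
          _ ≤ (1 / 2 : ℝ) ^ N := by
              apply pow_le_pow_of_le_one (by norm_num) (by norm_num) (by omega)
          _ < ε := hN
      set y : Kahn α := ⟨fun n => if n < M then x.1 n else none, by
        intro n h
        show (if n + 1 < M then x.1 (n + 1) else none) = none
        by_cases hn : n + 1 < M
        · have hn' : n < M := by omega
          have h' : x.1 n = none := by
            have := h
            rwa [show (fun n => if n < M then x.1 n else none) n = x.1 n from if_pos hn'] at this
          rw [if_pos hn, x.2 n h']
        · rw [if_neg hn]⟩ with hy
      have hyA : y ∈ A := by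
        refine ⟨⟨M, by simp [hy]⟩, ?_⟩
        show (if 0 < M then x.1 0 else none) ≠ none
        rw [if_pos (by omega)]
        exact h0
      refine ⟨y, hyA, ?_⟩
      by_cases hex : ∃ m, m < M ∧ x.1 m = none
      · have hex' : ∃ m, x.1 m = none := ⟨hex.choose, hex.choose_spec.2⟩
        set n0 := Nat.find hex' with hn0
        have hn0M : n0 < M := lt_of_le_of_lt (Nat.find_le hex.choose_spec.2) hex.choose_spec.1
        have h1 : lcp x.1 y.1 = (n0 : ℕ∞) := by
          apply lcp_eq_coe
          · exact Or.inl (Nat.find_spec hex')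
          · intro m hm
            push_neg
            refine ⟨Nat.find_min hex' hm, ?_⟩
            show x.1 m = (if m < M then x.1 m else none)
            exact (if_pos (by omega : m < M)).symm
        have h2 : lcp x.1 x.1 = (n0 : ℕ∞) := by
          apply lcp_eq_coe
          · exact Or.inl (Nat.find_spec hex')
          · intro m hm
            push_neg
            exact ⟨Nat.find_min hex' hm, rfl⟩
        rw [kp_eq _ _ n0 h1, kp_eq _ _ n0 h2]
        linarith
      · push_neg at hex
        have h1 : lcp x.1 y.1 = (M : ℕ∞) := by
          apply lcp_eq_coe
          · by_cases hM' : x.1 M = none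
            · exact Or.inl hM'
            · refine Or.inr ?_
              show x.1 M ≠ (if M < M then x.1 M else none)
              rw [if_neg (by omega)]
              exact hM'
          · intro m hm
            push_neg
            refine ⟨hex m hm, ?_⟩
            show x.1 m = (if m < M then x.1 m else none)
            exact (if_pos hm).symm
        rw [kp_eq _ _ M h1]
        have := kp_nonneg x.1 x.1
        linarith
  · intro h
    obtain ⟨y, hyA, _, h2⟩ := h ⟨fun _ => none, fun n _ => rfl⟩ (1 / 2) (by norm_num)
    exact part3 y hyA (1 / 2) (by norm_num) le_rfl h2
end

section
/- Let X be a partial metric space, X̄ a p-Cauchy completion of X in which X is symmetrically dense, and Y a p-Cauchy complete partial metric space. Then every isometric embedding f : X → Y extends uniquely to an isometric embedding f̄ : X̄ → Y. -/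
open Filter Topology in
def IsPCauchy {X : Type*} (p : X → X → ℝ) (u : ℕ → X) : Prop :=
  ∃ r : ℝ, Tendsto (fun q : ℕ × ℕ => p (u q.1) (u q.2)) atTop (𝓝 r)

open Filter Topology in
def PConvergesTo {X : Type*} (p : X → X → ℝ) (u : ℕ → X) (x : X) : Prop :=
  Tendsto (fun n => p x (u n)) atTop (𝓝 (p x x)) ∧
  Tendsto (fun n => p (u n) (u n)) atTop (𝓝 (p x x))

def IsPCauchyComplete {X : Type*} (p : X → X → ℝ) : Prop :=
  ∀ u : ℕ → X, IsPCauchy p u → ∃ x : X, PConvergesTo p u x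

open Filter Topology

/-- If `u` p-converges to `x` and `v` p-converges to `y`, then the distances
`p (u m) (v n)` converge to `p x y` along `atTop` on `ℕ × ℕ`. -/
lemma plim_prod {X : Type*} {p : X → X → ℝ} (hp : IsPartialMetric p)
    {u v : ℕ → X} {x y : X} (hu : PConvergesTo p u x) (hv : PConvergesTo p v y) :
    Tendsto (fun q : ℕ × ℕ => p (u q.1) (v q.2)) atTop (𝓝 (p x y)) := by
  obtain ⟨hpos, hsep, hss, hsym, htri⟩ := hp
  have hfst : Tendsto (fun q : ℕ × ℕ => q.1) atTop atTop := by
    rw [← prod_atTop_atTop_eq]; exact tendsto_fst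
  have hsnd : Tendsto (fun q : ℕ × ℕ => q.2) atTop atTop := by
    rw [← prod_atTop_atTop_eq]; exact tendsto_snd
  have hu1 : Tendsto (fun q : ℕ × ℕ => p x (u q.1)) atTop (𝓝 (p x x)) := hu.1.comp hfst
  have hu2 : Tendsto (fun q : ℕ × ℕ => p (u q.1) (u q.1)) atTop (𝓝 (p x x)) := hu.2.comp hfst
  have hv1 : Tendsto (fun q : ℕ × ℕ => p y (v q.2)) atTop (𝓝 (p y y)) := hv.1.comp hsnd
  have hv2 : Tendsto (fun q : ℕ × ℕ => p (v q.2) (v q.2)) atTop (𝓝 (p y y)) := hv.2.comp hsnd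
  have hc1 : Tendsto (fun _ : ℕ × ℕ => p x y) atTop (𝓝 (p x y)) := tendsto_const_nhds
  have hc2 : Tendsto (fun _ : ℕ × ℕ => p y y) atTop (𝓝 (p y y)) := tendsto_const_nhds
  have hc3 : Tendsto (fun _ : ℕ × ℕ => p x x) atTop (𝓝 (p x x)) := tendsto_const_nhds
  have hlow : Tendsto (fun q : ℕ × ℕ =>
      p x y - (p x (u q.1) - p (u q.1) (u q.1)) - (p y (v q.2) - p (v q.2) (v q.2)))
      atTop (𝓝 (p x y)) := by
    have h := (hc1.sub (hu1.sub hu2)).sub (hv1.sub hv2)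
    simpa using h
  have hhigh : Tendsto (fun q : ℕ × ℕ =>
      p x (u q.1) + (p x y + p y (v q.2) - p y y) - p x x) atTop (𝓝 (p x y)) := by
    have h := (hu1.add ((hc1.add hv1).sub hc2)).sub hc3
    simpa using h
  refine tendsto_of_tendsto_of_tendsto_of_le_of_le hlow hhigh ?_ ?_
  · intro q
    dsimp only
    have t1 := htri x (u q.1) y
    have t2 := htri (u q.1) (v q.2) y
    have s1 := hsym y (v q.2)
    linarith
  · intro q
    dsimp only
    have t3 := htri (u q.1) x (v q.2)
    have t4 := htri x y (v q.2)
    have s2 := hsym (u q.1) x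
    linarith

lemma plim_diag {X : Type*} {p : X → X → ℝ} (hp : IsPartialMetric p)
    {u v : ℕ → X} {x y : X} (hu : PConvergesTo p u x) (hv : PConvergesTo p v y) :
    Tendsto (fun n => p (u n) (v n)) atTop (𝓝 (p x y)) := by
  have hdiag : Tendsto (fun n : ℕ => ((n, n) : ℕ × ℕ)) atTop atTop := by
    rw [← prod_atTop_atTop_eq]; exact tendsto_id.prodMk tendsto_id
  exact (plim_prod hp hu hv).comp hdiag

lemma plim_unique {X : Type*} {p : X → X → ℝ} (hp : IsPartialMetric p)
    {u : ℕ → X} {x y : X} (hx : PConvergesTo p u x) (hy : PConvergesTo p u y) : x = y := by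
  have h1 : p x y = p x x := tendsto_nhds_unique (plim_diag hp hx hy) hx.2
  have h2 : p y x = p y y := tendsto_nhds_unique (plim_diag hp hy hx) hy.2
  exact hp.2.1 x y h1.symm (by rw [hp.2.2.2.1 x y]; exact h2)

theorem stmt16 {X Xb Y : Type*}
    (pX : X → X → ℝ) (pXb : Xb → Xb → ℝ) (pY : Y → Y → ℝ)
    (hpX : IsPartialMetric pX) (hpXb : IsPartialMetric pXb)
    (hpY : IsPartialMetric pY)
    (i : X → Xb) (hi : ∀ a b : X, pXb (i a) (i b) = pX a b)
    (hdense : ∀ z : Xb, ∀ ε : ℝ, 0 < ε → ∃ a : X, pXb z (i a) < pXb z z + ε)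
    (hsym : ∀ z : Xb, ∀ ε : ℝ, 0 < ε → ∃ a : X,
      pXb z (i a) < pXb z z + ε ∧ pXb (i a) z < pXb (i a) (i a) + ε)
    (hcompXb : IsPCauchyComplete pXb) (hcompY : IsPCauchyComplete pY)
    (f : X → Y) (hf : ∀ a b : X, pY (f a) (f b) = pX a b) :
    ∃! g : Xb → Y, (∀ z w : Xb, pY (g z) (g w) = pXb z w) ∧ ∀ a : X, g (i a) = f a := by
  have hfb : ∀ a b : X, pY (f a) (f b) = pXb (i a) (i b) := by
    intro a b; rw [hf, hi]
  have hone : Tendsto (fun n : ℕ => (1 : ℝ) / (n + 1)) atTop (𝓝 0) :=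
    tendsto_one_div_add_atTop_nhds_zero_nat
  -- Step 1: approximating sequences
  have approx : ∀ z : Xb, ∃ a : ℕ → X, PConvergesTo pXb (fun n => i (a n)) z := by
    intro z
    choose a ha1 ha2 using fun n : ℕ =>
      hsym z ((1 : ℝ) / (n + 1)) (by positivity)
    have hss := hpXb.2.2.1
    have hsm := hpXb.2.2.2.1
    refine ⟨a, ?_, ?_⟩
    · refine tendsto_of_tendsto_of_tendsto_of_le_of_le
        (tendsto_const_nhds) (g := fun _ : ℕ => pXb z z)
        (h := fun n : ℕ => pXb z z + 1 / (n + 1)) ?_ (fun n => hss z (i (a n)))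
        (fun n => (ha1 n).le)
      simpa using (tendsto_const_nhds (x := pXb z z) (f := atTop (α := ℕ))).add hone
    · refine tendsto_of_tendsto_of_tendsto_of_le_of_le
        (g := fun n : ℕ => pXb z z - 1 / (n + 1))
        (h := fun n : ℕ => pXb z z + 1 / (n + 1)) ?_ ?_ ?_ ?_
      · simpa using (tendsto_const_nhds (x := pXb z z) (f := atTop (α := ℕ))).sub hone
      · simpa using (tendsto_const_nhds (x := pXb z z) (f := atTop (α := ℕ))).add hone
      · intro n
        have h1 := ha2 n
        have h2 := hss z (i (a n))
        have h3 := hsm z (i (a n))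
        linarith
      · intro n
        have h1 := ha1 n
        have h2 := hss (i (a n)) z
        have h3 := hsm z (i (a n))
        linarith
  -- Step 2: lift to Y using completeness
  have lift : ∀ z : Xb, ∃ y : Y, ∃ a : ℕ → X,
      PConvergesTo pXb (fun n => i (a n)) z ∧ PConvergesTo pY (fun n => f (a n)) y := by
    intro z
    obtain ⟨a, ha⟩ := approx z
    have hc : IsPCauchy pY (fun n => f (a n)) := by
      refine ⟨pXb z z, ?_⟩
      have heq : (fun q : ℕ × ℕ => pY (f (a q.1)) (f (a q.2))) =
          fun q : ℕ × ℕ => pXb (i (a q.1)) (i (a q.2)) := by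
        funext q; exact hfb _ _
      rw [heq]
      exact plim_prod hpXb ha ha
    obtain ⟨y, hy⟩ := hcompY _ hc
    exact ⟨y, a, ha, hy⟩
  choose g a hag hfg using lift
  have hiso : ∀ z w : Xb, pY (g z) (g w) = pXb z w := by
    intro z w
    have h1 : Tendsto (fun n => pY (f (a z n)) (f (a w n))) atTop (𝓝 (pY (g z) (g w))) :=
      plim_diag hpY (hfg z) (hfg w)
    have h2 : Tendsto (fun n => pY (f (a z n)) (f (a w n))) atTop (𝓝 (pXb z w)) := by
      have heq : (fun n => pY (f (a z n)) (f (a w n))) =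
          fun n => pXb (i (a z n)) (i (a w n)) := by funext n; exact hfb _ _
      rw [heq]
      exact plim_diag hpXb (hag z) (hag w)
    exact tendsto_nhds_unique h1 h2
  have hext : ∀ c : X, g (i c) = f c := by
    intro c
    refine plim_unique hpY (hfg (i c)) ?_
    have hconst : PConvergesTo pXb (fun _ : ℕ => i c) (i c) :=
      ⟨tendsto_const_nhds, tendsto_const_nhds⟩
    constructor
    · have h := plim_diag hpXb hconst (hag (i c))
      have heq : (fun n => pY (f c) (f (a (i c) n))) =
          fun n => pXb (i c) (i (a (i c) n)) := by funext n; exact hfb _ _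
      rw [heq, hfb c c]
      exact h
    · have h := (hag (i c)).2
      have heq : (fun n => pY (f (a (i c) n)) (f (a (i c) n))) =
          fun n => pXb (i (a (i c) n)) (i (a (i c) n)) := by funext n; exact hfb _ _
      rw [heq, hfb c c]
      exact h
  refine ⟨g, ⟨hiso, hext⟩, ?_⟩
  rintro g' ⟨h1, h2⟩
  funext z
  refine plim_unique hpY ?_ (hfg z)
  constructor
  · have heq : (fun n => pY (g' z) (f (a z n))) = fun n => pXb z (i (a z n)) := by
      funext n; rw [← h2 (a z n), h1]
    rw [heq, h1 z z]
    exact (hag z).1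
  · have heq : (fun n => pY (f (a z n)) (f (a z n))) =
        fun n => pXb (i (a z n)) (i (a z n)) := by funext n; exact hfb _ _
    rw [heq, h1 z z]
    exact (hag z).2
end

section
/- Every nonempty partial metric space X admits two non-isometric p-Cauchy completions, provided X has at least one p-Cauchy completion in which it is symmetrically dense; more concretely, the one-point space {a} with p(a,a)=0 has two non-isometric p-Cauchy completions. -/
universe u v

open Filter Topology

/-- Glue a new point to a partial metric space at "distance + 1" from a basepoint. -/
def optP {Y : Type*} (p : Y → Y → ℝ) (y₀ : Y) : Option Y → Option Y → ℝ
  | some a, some b => p a b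
  | some a, none => p a y₀ + 1
  | none, some b => p b y₀ + 1
  | none, none => p y₀ y₀ + 1

lemma optP_metric {Y : Type*} {p : Y → Y → ℝ} (hp : IsPartialMetric p) (y₀ : Y) :
    IsPartialMetric (optP p y₀) := by
  obtain ⟨h0, hsep, hsmall, hsymm, htri⟩ := hp
  refine ⟨?_, ?_, ?_, ?_, ?_⟩
  · rintro (_ | x) (_ | y) <;> simp only [optP]
    · linarith [h0 y₀ y₀]
    · linarith [h0 y y₀]
    · linarith [h0 x y₀]
    · exact h0 x y
  · rintro (_ | x) (_ | y) h1 h2 <;> simp only [optP] at h1 h2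
    · rfl
    · exfalso; linarith [hsmall y y₀]
    · exfalso; linarith [hsmall x y₀]
    · rw [hsep x y h1 h2]
  · rintro (_ | x) (_ | y) <;> simp only [optP]
    · exact le_refl _
    · linarith [hsmall y₀ y, hsymm y₀ y]
    · linarith [hsmall x y₀]
    · exact hsmall x y
  · rintro (_ | x) (_ | y) <;> simp only [optP] <;> first | rfl | exact hsymm x y
  · rintro (_ | x) (_ | y) (_ | z) <;> simp only [optP]
    · linarith
    · linarith
    · linarith [htri y₀ y y₀, hsymm y₀ y]
    · linarith [htri y₀ y z, hsymm y₀ z, hsymm y y₀]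
    · linarith
    · linarith [htri x y₀ z, hsymm y₀ z]
    · linarith [htri x y y₀]
    · exact htri x y z

lemma pair_tendsto {M : ℕ} :
    Filter.Tendsto (fun q : ℕ × ℕ => ((q.1 + M, q.2 + M) : ℕ × ℕ)) atTop atTop := by
  refine Filter.tendsto_atTop_atTop.mpr ?_
  rintro ⟨b1, b2⟩
  exact ⟨(b1, b2), fun ⟨a1, a2⟩ ⟨h1, h2⟩ => ⟨by simpa using Nat.le_add_right_of_le h1,
    by simpa using Nat.le_add_right_of_le h2⟩⟩

lemma diag_tendsto : Filter.Tendsto (fun n : ℕ => ((n, n) : ℕ × ℕ)) atTop atTop := by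
  refine Filter.tendsto_atTop_atTop.mpr ?_
  rintro ⟨b1, b2⟩
  exact ⟨max b1 b2, fun a ha => ⟨le_trans (le_max_left _ _) ha, le_trans (le_max_right _ _) ha⟩⟩

lemma optP_complete {Y : Type*} {p : Y → Y → ℝ} (hp : IsPartialMetric p) (y₀ : Y)
    (hc : IsPCauchyComplete p) : IsPCauchyComplete (optP p y₀) := by
  intro u hu
  obtain ⟨r, hr⟩ := hu
  by_cases hev : ∃ M : ℕ, ∀ n ≥ M, u n ≠ none
  · -- eventually in Y : use completeness of Y
    obtain ⟨M, hM⟩ := hev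
    set v : ℕ → Y := fun n => (u (n + M)).getD y₀ with hv
    have husome : ∀ n, u (n + M) = some (v n) := by
      intro n
      have hne := hM (n + M) (Nat.le_add_left _ _)
      cases h : u (n + M) with
      | none => exact absurd h hne
      | some y => simp [hv, h]
    have hvC : IsPCauchy p v := by
      refine ⟨r, ?_⟩
      have := hr.comp (pair_tendsto (M := M))
      refine this.congr ?_
      rintro ⟨m, n⟩
      simp only [Function.comp_apply, husome m, husome n, optP]
    obtain ⟨x, hx1, hx2⟩ := hc v hvC
    have hsub : Filter.Tendsto (fun n : ℕ => n - M) atTop atTop := by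
      refine Filter.tendsto_atTop_atTop.mpr fun b => ⟨b + M, fun a ha => by omega⟩
    have hrewrite : ∀ n ≥ M, u n = some (v (n - M)) := by
      intro n hn
      have := husome (n - M)
      rwa [Nat.sub_add_cancel hn] at this
    refine ⟨some x, ?_, ?_⟩
    · have h1 : Filter.Tendsto (fun n : ℕ => p x (v (n - M))) atTop (𝓝 (p x x)) :=
        hx1.comp hsub
      refine h1.congr' ?_
      filter_upwards [eventually_ge_atTop M] with n hn
      rw [hrewrite n hn]; rfl
    · have h1 : Filter.Tendsto (fun n : ℕ => p (v (n - M)) (v (n - M))) atTop (𝓝 (p x x)) :=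
        hx2.comp hsub
      refine h1.congr' ?_
      filter_upwards [eventually_ge_atTop M] with n hn
      rw [hrewrite n hn]; rfl
  · -- `none` occurs frequently : converge to `none`
    push_neg at hev
    rw [Metric.tendsto_atTop] at hr
    have hrval : r = p y₀ y₀ + 1 := by
      have key : ∀ ε > (0:ℝ), dist (p y₀ y₀ + 1) r < ε := by
        intro ε hε
        obtain ⟨⟨N1, N2⟩, hN⟩ := hr ε hε
        obtain ⟨m, hm, hmnone⟩ := hev (max N1 N2)
        have := hN (m, m) ⟨le_trans (le_max_left _ _) hm, le_trans (le_max_right _ _) hm⟩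
        simpa [hmnone, optP] using this
      have hd : dist (p y₀ y₀ + 1) r = 0 := by
        by_contra h
        exact absurd (key _ (lt_of_le_of_ne dist_nonneg (Ne.symm h))) (lt_irrefl _)
      exact (eq_of_dist_eq_zero hd).symm
    refine ⟨none, ?_, ?_⟩
    · show Filter.Tendsto (fun n => optP p y₀ none (u n)) atTop (𝓝 (optP p y₀ none none))
      have : optP p y₀ none none = r := by rw [hrval]; rfl
      rw [this, Metric.tendsto_atTop]
      intro ε hε
      obtain ⟨⟨N1, N2⟩, hN⟩ := hr ε hε
      obtain ⟨m, hm, hmnone⟩ := hev (max N1 N2)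
      refine ⟨max N1 N2, fun n hn => ?_⟩
      have := hN (m, n) ⟨le_trans (le_max_left _ _) hm, le_trans (le_max_right _ _) hn⟩
      simpa [hmnone] using this
    · show Filter.Tendsto (fun n => optP p y₀ (u n) (u n)) atTop (𝓝 (optP p y₀ none none))
      have : optP p y₀ none none = r := by rw [hrval]; rfl
      rw [this, Metric.tendsto_atTop]
      intro ε hε
      obtain ⟨⟨N1, N2⟩, hN⟩ := hr ε hε
      refine ⟨max N1 N2, fun n hn => ?_⟩
      exact hN (n, n) ⟨le_trans (le_max_left _ _) hn, le_trans (le_max_right _ _) hn⟩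

theorem stmt18 {X : Type u} [Nonempty X] (pX : X → X → ℝ)
    (hpX : IsPartialMetric pX)
    (Xb : Type v) (pXb : Xb → Xb → ℝ) (hpXb : IsPartialMetric pXb)
    (i : X → Xb) (hi : ∀ a b : X, pXb (i a) (i b) = pX a b)
    (hcompXb : IsPCauchyComplete pXb)
    (hsym : ∀ z : Xb, ∀ ε : ℝ, 0 < ε → ∃ a : X,
      pXb z (i a) < pXb z z + ε ∧ pXb (i a) z < pXb (i a) (i a) + ε) :
    (∃ (W : Type v) (pW : W → W → ℝ) (j : X → W),
      IsPartialMetric pW ∧ (∀ a b : X, pW (j a) (j b) = pX a b) ∧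
      IsPCauchyComplete pW ∧
      (∀ z : W, ∀ ε : ℝ, 0 < ε → ∃ a : X, pW z (j a) < pW z z + ε) ∧
      ¬ ∃ f : Xb → W, Function.Bijective f ∧
          (∀ z w : Xb, pW (f z) (f w) = pXb z w) ∧ ∀ a : X, f (i a) = j a) ∧
    (let pU : Unit → Unit → ℝ := fun _ _ => 0
     let pB : Bool → Bool → ℝ := fun x y => if x = false ∧ y = false then 0 else 1
     IsPartialMetric pU ∧ IsPCauchyComplete pU ∧
     IsPartialMetric pB ∧ IsPCauchyComplete pB ∧
     (∀ z : Bool, ∀ ε : ℝ, 0 < ε → pB z false < pB z z + ε) ∧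
     ¬ ∃ f : Unit → Bool, Function.Bijective f ∧
         ∀ z w : Unit, pB (f z) (f w) = pU z w) := by
  obtain ⟨h0, hsep, hsmall, hsymm, htri⟩ := hpXb
  have hpXb' : IsPartialMetric pXb := ⟨h0, hsep, hsmall, hsymm, htri⟩
  constructor
  · -- abstract part
    obtain ⟨a₀⟩ := ‹Nonempty X›
    refine ⟨Option Xb, optP pXb (i a₀), fun a => some (i a),
      optP_metric hpXb' (i a₀), fun a b => hi a b,
      optP_complete hpXb' (i a₀) hcompXb, ?_, ?_⟩
    · rintro (_ | w) ε hε
      · obtain ⟨a, ha1, _⟩ := hsym (i a₀) ε hε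
        refine ⟨a, ?_⟩
        show pXb (i a) (i a₀) + 1 < pXb (i a₀) (i a₀) + 1 + ε
        rw [hsymm (i a) (i a₀)]; linarith
      · obtain ⟨a, ha1, _⟩ := hsym w ε hε
        exact ⟨a, by simpa [optP] using by linarith⟩
    · rintro ⟨f, ⟨finj, fsurj⟩, hiso, hfix⟩
      obtain ⟨z, hz⟩ := fsurj none
      obtain ⟨a, _, h2⟩ := hsym z (1/2) (by norm_num)
      have key := hiso (i a) z
      rw [hfix a, hz] at key
      have hval : optP pXb (i a₀) (some (i a)) none = pXb (i a) (i a₀) + 1 := rfl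
      rw [hval] at key
      have hs : pXb (i a) (i a) ≤ pXb (i a) (i a₀) := hsmall _ _
      linarith
  · -- concrete part
    intro pU pB
    refine ⟨⟨fun _ _ => le_refl 0, fun x y _ _ => rfl, fun _ _ => le_refl 0,
      fun _ _ => rfl, fun _ _ _ => by norm_num⟩, ?_, ?_, ?_, ?_, ?_⟩
    · intro u _
      exact ⟨(), tendsto_const_nhds, tendsto_const_nhds⟩
    · refine ⟨?_, ?_, ?_, ?_, ?_⟩
      · rintro x y <;> cases x <;> cases y <;> norm_num [pB]
      · rintro x y h1 h2 <;> cases x <;> cases y <;> simp_all [pB]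
      · rintro x y <;> cases x <;> cases y <;> norm_num [pB]
      · rintro x y <;> cases x <;> cases y <;> norm_num [pB]
      · rintro x y z <;> cases x <;> cases y <;> cases z <;> norm_num [pB]
    · intro w hw
      obtain ⟨r, hr⟩ := hw
      by_cases h1 : ∃ M : ℕ, ∀ n ≥ M, w n = false
      · obtain ⟨M, hM⟩ := h1
        refine ⟨false, ?_, ?_⟩
        · have : pB false false = 0 := by norm_num [pB]
          rw [this]
          refine tendsto_const_nhds.congr' ?_
          filter_upwards [eventually_ge_atTop M] with n hn
          simp [pB, hM n hn]
        · have : pB false false = 0 := by norm_num [pB]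
          rw [this]
          refine tendsto_const_nhds.congr' ?_
          filter_upwards [eventually_ge_atTop M] with n hn
          simp [pB, hM n hn]
      · by_cases h2 : ∃ M : ℕ, ∀ n ≥ M, w n = true
        · obtain ⟨M, hM⟩ := h2
          refine ⟨true, ?_, ?_⟩
          · have : ∀ y, pB true y = 1 := fun y => by norm_num [pB]
            simp only [this]
            exact tendsto_const_nhds
          · have : pB true true = 1 := by norm_num [pB]
            rw [this]
            refine tendsto_const_nhds.congr' ?_
            filter_upwards [eventually_ge_atTop M] with n hn
            simp [pB, hM n hn]
        · exfalso
          push_neg at h1 h2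
          simp only [Bool.not_eq_false] at h1
          simp only [Bool.not_eq_true] at h2
          rw [Metric.tendsto_atTop] at hr
          obtain ⟨⟨N1, N2⟩, hN⟩ := hr (1/2) (by norm_num)
          obtain ⟨m, hm, hmt⟩ := h1 (max N1 N2)
          obtain ⟨n, hn, hnf⟩ := h2 (max N1 N2)
          have k1 := hN (m, m) ⟨le_trans (le_max_left _ _) hm, le_trans (le_max_right _ _) hm⟩
          have k2 := hN (n, n) ⟨le_trans (le_max_left _ _) hn, le_trans (le_max_right _ _) hn⟩
          simp only [hmt, hnf] at k1 k2
          have e1 : pB true true = 1 := by norm_num [pB]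
          have e2 : pB false false = 0 := by norm_num [pB]
          rw [e1, Real.dist_eq] at k1
          rw [e2, Real.dist_eq] at k2
          rw [abs_lt] at k1 k2
          linarith [k1.1, k1.2, k2.1, k2.2]
    · intro z ε hε
      cases z <;> norm_num [pB] <;> linarith
    · rintro ⟨f, ⟨_, fsurj⟩, _⟩
      obtain ⟨a, ha⟩ := fsurj true
      obtain ⟨b, hb⟩ := fsurj false
      have : a = b := rfl
      rw [this, hb] at ha
      exact Bool.noConfusion ha
end
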